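/- arXiv:1810.03533 — 10 statements merged into one kernel-verified Lean document; each statement's English description precedes it below -/
import Mathlib

section
/- The formal power series F_p = Σ t_n^{(p)} X^n over F_p, where t_n^{(p)} is the sum of base-p digits of n reduced mod p, satisfies (1 - X)^{p+1} F_p^p - (1 - X)^2 F_p + X = 0. -/
/-!
Since the last base-`p` digit of `n` is `n % p ≡ n (mod p)`, the coefficients satisfy
`t n = t (n / p) + n` in `𝔽_p`. In characteristic `p` one has `F ^ p = F(X ^ p)`, so this recursion
reads `F = (1 + X + ⋯ + X ^ (p - 1)) F ^ p + ∑ n Xⁿ`. Multiplying by `(1 - X) ^ 2` and using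
`(1 - X)(1 + ⋯ + X ^ (p - 1)) = 1 - X ^ p = (1 - X) ^ p` and `(1 - X) ^ 2 ∑ n Xⁿ = X` gives the equation.
-/

open PowerSeries

namespace PowerSeries

theorem map_frobenius_expand {R : Type*} [CommRing R] (p : ℕ) (hp : p ≠ 0) [ExpChar R p]
    (f : R⟦X⟧) : map (frobenius R p) (expand p hp f) = f ^ p :=
  MvPowerSeries.map_frobenius_expand p hp

theorem zmod_pow_eq_expand (p : ℕ) [hp : Fact p.Prime] (f : (ZMod p)⟦X⟧) :
    f ^ p = expand p hp.out.ne_zero f := by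
  rw [← map_frobenius_expand p hp.out.ne_zero, ZMod.frobenius_zmod, map_id]
  rfl

theorem coeff_geom_sum_mul_expand {R : Type*} [CommRing R] (p : ℕ) (hp : p ≠ 0) (f : R⟦X⟧)
    (n : ℕ) : coeff n ((∑ i ∈ Finset.range p, X ^ i) * expand p hp f) = coeff (n / p) f := by
  simp only [Finset.sum_mul, map_sum, coeff_X_pow_mul', coeff_expand]
  rw [Finset.sum_eq_single_of_mem (n % p) (Finset.mem_range.2 (Nat.mod_lt n (by omega)))]
  · have hsplit : n - n % p = p * (n / p) := by have := Nat.mod_add_div n p; omega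
    rw [if_pos (Nat.mod_le n p), hsplit, if_pos (dvd_mul_right p _),
      Nat.mul_div_cancel_left _ (by omega)]
  · intro i hi hne
    split_ifs with hin hdvd
    · have hmod : i % p = n % p := (Nat.modEq_iff_dvd' hin).2 hdvd
      rw [Nat.mod_eq_of_lt (Finset.mem_range.1 hi)] at hmod
      exact absurd hmod hne
    all_goals rfl

theorem one_sub_X_sq_mul_mk_natCast {R : Type*} [CommRing R] :
    (1 - X) ^ 2 * mk (fun n => (n : R)) = X := by
  have h : (1 - X) * mk (fun n => (n : R)) = X * mk 1 := by
    ext (_ | n)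
    · simp
    · simp [sub_mul, coeff_succ_X_mul]
  rw [sq, mul_assoc, h, mul_left_comm, mul_comm _ (mk 1), mk_one_mul_one_sub_eq_one, mul_one]

end PowerSeries

theorem Nat.digits_sum_eq_mod_add_digits_sum_div {b : ℕ} (hb : 1 < b) (n : ℕ) :
    (Nat.digits b n).sum = n % b + (Nat.digits b (n / b)).sum := by
  rcases Nat.eq_zero_or_pos n with rfl | hn
  · simp
  · rw [Nat.digits_def' hb hn, List.sum_cons]

def digitSumSeries (p : ℕ) : (ZMod p)⟦X⟧ :=
  mk fun n => ((Nat.digits p n).sum : ZMod p)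

theorem digitSumSeries_eq_geom_sum_mul_pow_add (p : ℕ) [hp : Fact p.Prime] :
    digitSumSeries p =
      (∑ i ∈ Finset.range p, X ^ i) * digitSumSeries p ^ p + mk fun n => (n : ZMod p) := by
  ext n
  rw [map_add, zmod_pow_eq_expand, coeff_geom_sum_mul_expand]
  simp only [digitSumSeries, coeff_mk]
  rw [Nat.digits_sum_eq_mod_add_digits_sum_div hp.out.one_lt, Nat.cast_add, ZMod.natCast_mod,
    add_comm]

theorem thue_morse_series_equation (p : ℕ) (hp : p.Prime)
    (F : PowerSeries (ZMod p))
    (hF : F = PowerSeries.mk fun n => ((Nat.digits p n).sum : ZMod p)) :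
    (1 - PowerSeries.X) ^ (p + 1) * F ^ p - (1 - PowerSeries.X) ^ 2 * F
      + PowerSeries.X = 0 := by
  have : Fact p.Prime := ⟨hp⟩
  obtain rfl : F = digitSumSeries p := hF
  have hgeom : (1 - X) * ∑ i ∈ Finset.range p, X ^ i = (1 - X : (ZMod p)⟦X⟧) ^ p := by
    rw [mul_neg_geom_sum, zmod_pow_eq_expand p (1 - X), map_sub, map_one, expand_X]
  linear_combination -(1 - X) ^ 2 * digitSumSeries_eq_geom_sum_mul_pow_add p
    - (1 - X) * digitSumSeries p ^ p * hgeom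
    - one_sub_X_sq_mul_mk_natCast (R := ZMod p)
end

section
/- In the ternary Thue–Morse sequence (t_n) (sum of base-3 digits of n mod 3), the maximal run length of any fixed value a ∈ F_3 is 2; i.e., there is no n with t_n = t_{n+1} = t_{n+2}. -/
lemma tm_step (n : ℕ) (h : n % 3 ≠ 2) :
    ((Nat.digits 3 (n+1)).sum : ZMod 3) = ((Nat.digits 3 n).sum : ZMod 3) + 1 := by
  have h1 : Nat.digits 3 (n+1) = (n+1) % 3 :: Nat.digits 3 ((n+1)/3) :=
    Nat.digits_def' (by norm_num) (Nat.succ_pos n)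
  have e1 : (n+1) % 3 = n % 3 + 1 := by omega
  have e2 : (n+1) / 3 = n / 3 := by omega
  rcases Nat.eq_zero_or_pos n with rfl | hn
  · simp [h1]
  · have h2 : Nat.digits 3 n = n % 3 :: Nat.digits 3 (n/3) :=
      Nat.digits_def' (by norm_num) hn
    rw [h1, h2, e1, e2]
    simp only [List.sum_cons]
    push_cast
    ring

theorem ternary_thue_morse_no_three_equal
    (t : ℕ → ZMod 3) (ht : ∀ n, t n = ((Nat.digits 3 n).sum : ZMod 3)) :
    ¬ ∃ n : ℕ, t n = t (n + 1) ∧ t (n + 1) = t (n + 2) := by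
  rintro ⟨n, h1, h2⟩
  have key : ∀ m : ℕ, t m = t (m + 1) → m % 3 = 2 := by
    intro m hm
    by_contra hne
    have := tm_step m hne
    rw [ht m, ht (m+1)] at hm
    rw [hm] at this
    exact one_ne_zero (by linear_combination -this)
  have k1 := key n h1
  have k2 := key (n+1) h2
  omega
end

section
/- For each a ∈ F_3 with a ≠ 0, the frequency of a in the ternary Thue–Morse sequence (t_n) is 1/3: |{k < N : t_k = a}| / N → 1/3 as N → ∞. -/
open Filter Finset

lemma tmr_step (t : ℕ → ZMod 3) (ht : ∀ n, t n = ((Nat.digits 3 n).sum : ZMod 3))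
    (m i : ℕ) (hi : i < 3) (h : 3*m+i ≠ 0) : t (3*m+i) = t m + i := by
  rw [ht, ht, Nat.digits_def' (b := 3) (by norm_num) (Nat.pos_of_ne_zero h)]
  have h1 : (3*m+i) % 3 = i := by omega
  have h2 : (3*m+i) / 3 = m := by omega
  rw [h1, h2, List.sum_cons]
  push_cast; ring

lemma card_filter_succ (p : ℕ → Prop) [DecidablePred p] (n : ℕ) :
    ((Finset.range (n+1)).filter p).card
      = ((Finset.range n).filter p).card + if p n then 1 else 0 := by
  rw [Finset.range_add_one, Finset.filter_insert]
  split
  · rw [Finset.card_insert_of_notMem (by simp)]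
  · simp

lemma tmr_count (t : ℕ → ZMod 3) (ht : ∀ n, t n = ((Nat.digits 3 n).sum : ZMod 3))
    (a : ZMod 3) (m : ℕ) :
    ((Finset.range (3*m)).filter fun k => t k = a).card = m := by
  induction m with
  | zero => simp
  | succ n ih =>
    have e : 3*(n+1) = ((3*n+1)+1)+1 := by ring
    rw [e, card_filter_succ, card_filter_succ]
    have e3 : 3*n+1 = (3*n)+1 := by ring
    rw [e3, card_filter_succ, ih]
    have h1 : t (3*n+1) = t n + 1 := by
      have := tmr_step t ht n 1 (by norm_num) (by omega); simpa using this
    have h2 : t (3*n+1+1) = t n + 2 := by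
      have := tmr_step t ht n 2 (by norm_num) (by omega)
      rw [show 3*n+2 = 3*n+1+1 by ring] at this; simpa using this
    have h0 : t (3*n) = t n := by
      rcases Nat.eq_zero_or_pos (3*n) with h | h
      · have hn : n = 0 := by omega
        subst hn; simp
      · have := tmr_step t ht n 0 (by norm_num) (by omega); simpa using this
    rw [h0, h1, h2]
    have key : ∀ x a : ZMod 3,
        (if x = a then 1 else 0) + (if x + 1 = a then 1 else 0)
          + (if x + 2 = a then 1 else 0) = 1 := by decide
    have hk := key (t n) a
    omega

theorem ternary_thue_morse_frequency
    (t : ℕ → ZMod 3) (ht : ∀ n, t n = ((Nat.digits 3 n).sum : ZMod 3))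
    (a : ZMod 3) (ha : a ≠ 0) :
    Filter.Tendsto
      (fun N : ℕ => (((Finset.range N).filter fun k => t k = a).card : ℝ) / N)
      Filter.atTop (nhds (1 / 3)) := by
  have hlow : ∀ N : ℕ, N / 3 ≤ ((Finset.range N).filter fun k => t k = a).card := by
    intro N
    rw [← tmr_count t ht a (N/3)]
    exact Finset.card_le_card (Finset.filter_subset_filter _
      (Finset.range_subset_range.2 (by omega)))
  have hhigh : ∀ N : ℕ, ((Finset.range N).filter fun k => t k = a).card ≤ N / 3 + 1 := by
    intro N
    have := tmr_count t ht a (N/3 + 1)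
    calc ((Finset.range N).filter fun k => t k = a).card
        ≤ ((Finset.range (3*(N/3+1))).filter fun k => t k = a).card :=
          Finset.card_le_card (Finset.filter_subset_filter _
            (Finset.range_subset_range.2 (by omega)))
      _ = N / 3 + 1 := this
  have hb : ∀ N : ℕ, 1 ≤ N →
      |(((Finset.range N).filter fun k => t k = a).card : ℝ) / N - 1/3| ≤ 3 / N := by
    intro N hN
    have hNpos : (0:ℝ) < N := by exact_mod_cast hN
    set c : ℝ := (((Finset.range N).filter fun k => t k = a).card : ℝ) with hc
    have hcast1 : ((N/3 : ℕ):ℝ) ≤ c := by rw [hc]; exact_mod_cast hlow N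
    have hcast2 : c ≤ ((N/3 : ℕ):ℝ) + 1 := by rw [hc]; push_cast; exact_mod_cast hhigh N
    have hq1 : (N:ℝ) ≤ 3*((N/3:ℕ):ℝ) + 2 := by exact_mod_cast (by omega : N ≤ 3*(N/3)+2)
    have hq2 : 3*((N/3:ℕ):ℝ) ≤ N := by exact_mod_cast (by omega : 3*(N/3) ≤ N)
    have e : c/N - 1/3 = (3*c - N)/(3*N) := by field_simp
    rw [e, abs_div, abs_of_pos (by positivity : (0:ℝ) < 3*N),
      div_le_div_iff₀ (by positivity) hNpos]
    have habs : |3*c - N| ≤ 3 := abs_le.2 ⟨by linarith, by linarith⟩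
    nlinarith [habs, hNpos]
  have h3 : Tendsto (fun N : ℕ => (3:ℝ) / N) atTop (nhds 0) := by
    simpa using tendsto_const_nhds.div_atTop (tendsto_natCast_atTop_atTop (R := ℝ))
  rw [Metric.tendsto_atTop]
  intro ε hε
  rw [Metric.tendsto_atTop] at h3
  obtain ⟨M, hM⟩ := h3 ε hε
  refine ⟨max M 1, fun N hN => ?_⟩
  have h1 : 1 ≤ N := le_trans (le_max_right _ _) hN
  have h2 := hM N (le_trans (le_max_left _ _) hN)
  rw [Real.dist_eq] at *
  have := hb N h1
  have hpos : (0:ℝ) < N := by exact_mod_cast h1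
  have : |(3:ℝ)/N - 0| = 3/N := by rw [sub_zero, abs_of_pos (by positivity)]
  calc |(((Finset.range N).filter fun k => t k = a).card : ℝ) / N - 1/3| ≤ 3/N := hb N h1
    _ = |(3:ℝ)/N - 0| := this.symm
    _ < ε := h2
end

section
/- The Rudin–Shapiro-type sequence (r_n) over F_2 defined by r_0 = 1, r_{2n} = r_n, r_{4n+1} = r_n, r_{4n+3} = 1 + r_{2n+1} satisfies: its generating series R = Σ r_n X^n ∈ F_2[[X]] satisfies (1 + X)^5 R^2 + (1 + X)^4 R + X^3 = 0. -/
/-!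
Over `𝔽₂` squaring a power series is the substitution `X ↦ X ^ 2`, so splitting a series into its
even and odd parts reads `F = A ^ 2 + X * B ^ 2`. With `T = ∑ r (2n+1) Xⁿ`, the recursions give
`R = R ^ 2 + X * T ^ 2` and `T = R ^ 2 + X * (1 / (1 + X) + T) ^ 2`. Multiplying the second
identity by `(1 + X) ^ 2` and using the first gives `(1 + X) ^ 2 * T = (1 + X) ^ 2 * R + X`;
substituting this into the first identity multiplied by `(1 + X) ^ 4` gives the equation.
-/

open PowerSeries

namespace PowerSeries

instance instCharP {R : Type*} [CommRing R] (p : ℕ) [CharP R p] : CharP R⟦X⟧ p :=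
  charP_of_injective_algebraMap C_injective p

theorem expand_zmod_eq_pow (p : ℕ) [Fact p.Prime] (f : (ZMod p)⟦X⟧) :
    expand p (NeZero.ne p) f = f ^ p := by
  have := MvPowerSeries.map_frobenius_expand p (NeZero.ne p) (f := f)
  rwa [ZMod.frobenius_zmod, MvPowerSeries.map_id] at this

theorem mk_eq_expand_add_X_mul_expand {R : Type*} [CommRing R] (f : ℕ → R) :
    mk f = expand 2 two_ne_zero (mk fun n => f (2 * n))
      + X * expand 2 two_ne_zero (mk fun n => f (2 * n + 1)) := by
  ext n
  rcases Nat.even_or_odd' n with ⟨k, rfl | rfl⟩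
  · have hodd : coeff (2 * k) (X * expand 2 two_ne_zero (mk fun n => f (2 * n + 1))) = 0 := by
      cases k with
      | zero => exact coeff_zero_X_mul _
      | succ k =>
        rw [show 2 * (k + 1) = 2 * k + 1 + 1 by ring, coeff_succ_X_mul]
        exact coeff_expand_of_not_dvd _ _ _ (by omega)
    rw [map_add, hodd, add_zero, coeff_expand_mul, coeff_mk, coeff_mk]
  · rw [map_add, coeff_succ_X_mul, coeff_expand_mul, coeff_expand_of_not_dvd _ _ _ (by omega),
      coeff_mk, coeff_mk, zero_add]

theorem mk_eq_sq_add_X_mul_sq (f : ℕ → ZMod 2) :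
    mk f = (mk fun n => f (2 * n)) ^ 2 + X * (mk fun n => f (2 * n + 1)) ^ 2 := by
  have : Fact (Nat.Prime 2) := ⟨Nat.prime_two⟩
  rw [← expand_zmod_eq_pow, ← expand_zmod_eq_pow]
  exact mk_eq_expand_add_X_mul_expand f

theorem one_add_X_mul_mk_one {R : Type*} [CommRing R] [CharP R 2] :
    (1 + X) * mk 1 = (1 : R⟦X⟧) := by
  rw [mul_comm, ← CharTwo.sub_eq_add, mk_one_mul_one_sub_eq_one]

end PowerSeries

theorem rudinShapiro_relation_of_splittings {A : Type*} [CommRing A] [CharP A 2] {x R T G : A}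
    (hG : (1 + x) * G = 1) (hR : R = R ^ 2 + x * T ^ 2) (hT : T = R ^ 2 + x * (G + T) ^ 2) :
    (1 + x) ^ 5 * R ^ 2 + (1 + x) ^ 4 * R + x ^ 3 = 0 := by
  have hT' : (1 + x) ^ 2 * T = (1 + x) ^ 2 * R + x := by
    linear_combination (norm := (ring_nf; reduce_mod_char!))
      (1 + x) ^ 2 * hT - (1 + x) ^ 2 * hR + x * ((1 + x) * G + 1) * hG
  linear_combination (norm := (ring_nf; reduce_mod_char!))
    (1 + x) ^ 4 * hR + x * ((1 + x) ^ 2 * T + (1 + x) ^ 2 * R + x) * hT'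

theorem rudin_shapiro_series_equation_general
    (r : ℕ → ZMod 2)
    (h2 : ∀ n, r (2 * n) = r n)
    (h41 : ∀ n, r (4 * n + 1) = r n)
    (h43 : ∀ n, r (4 * n + 3) = 1 + r (2 * n + 1))
    (R : PowerSeries (ZMod 2)) (hR : R = PowerSeries.mk r) :
    (1 + PowerSeries.X) ^ 5 * R ^ 2 + (1 + PowerSeries.X) ^ 4 * R
      + PowerSeries.X ^ 3 = 0 := by
  subst hR
  refine rudinShapiro_relation_of_splittings one_add_X_mul_mk_one
    (T := mk fun n => r (2 * n + 1)) ?_ ?_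
  · simpa only [h2] using mk_eq_sq_add_X_mul_sq r
  · have h4n1 : ∀ n, 2 * (2 * n) + 1 = 4 * n + 1 := fun n => by ring
    have h4n3 : ∀ n, 2 * (2 * n + 1) + 1 = 4 * n + 3 := fun n => by ring
    have hmk : (mk fun n => 1 + r (2 * n + 1)) = mk 1 + mk fun n => r (2 * n + 1) := rfl
    simpa only [h4n1, h4n3, h41, h43, hmk] using mk_eq_sq_add_X_mul_sq fun n => r (2 * n + 1)

theorem rudin_shapiro_series_equation
    (r : ℕ → ZMod 2) (h0 : r 0 = 1)
    (h2 : ∀ n, r (2 * n) = r n)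
    (h41 : ∀ n, r (4 * n + 1) = r n)
    (h43 : ∀ n, r (4 * n + 3) = 1 + r (2 * n + 1))
    (R : PowerSeries (ZMod 2)) (hR : R = PowerSeries.mk r) :
    (1 + PowerSeries.X) ^ 5 * R ^ 2 + (1 + PowerSeries.X) ^ 4 * R
      + PowerSeries.X ^ 3 = 0 :=
  rudin_shapiro_series_equation_general r h2 h41 h43 R hR
end

section
/- For the sequence (r_n) over F_2 (Rudin–Shapiro with values in {0,1}), for every n ∈ ℕ the set {r_{4n+2}, r_{4n+3}} equals {0, 1}; consequently there is no run of 5 equal consecutive values in (r_n). -/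
theorem rudin_shapiro_no_five_equal
    (r : ℕ → ZMod 2) (h0 : r 0 = 1)
    (h2 : ∀ n, r (2 * n) = r n)
    (h41 : ∀ n, r (4 * n + 1) = r n)
    (h43 : ∀ n, r (4 * n + 3) = 1 + r (2 * n + 1)) :
    (∀ n : ℕ, ({r (4 * n + 2), r (4 * n + 3)} : Set (ZMod 2)) = {0, 1}) ∧
      ¬ ∃ n : ℕ, ∀ i < 4, r (n + i + 1) = r (n + i) := by
  have key : ∀ n : ℕ, r (4 * n + 2) = r (2 * n + 1) := by
    intro n
    have := h2 (2 * n + 1)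
    rw [show 2 * (2 * n + 1) = 4 * n + 2 by ring] at this
    exact this
  constructor
  · intro n
    rw [key n, h43 n]
    have ha : r (2 * n + 1) = 0 ∨ r (2 * n + 1) = 1 :=
      (by decide : ∀ a : ZMod 2, a = 0 ∨ a = 1) _
    rcases ha with ha | ha <;> rw [ha] <;>
      simp [Set.pair_comm, show (1 + 1 : ZMod 2) = 0 from by decide]
  · rintro ⟨n, hn⟩
    set k := (2 + 4 - n % 4) % 4 with hk
    have hk4 : k < 4 := Nat.mod_lt _ (by norm_num)
    have hmod : (n + k) % 4 = 2 := by
      have h1 : n % 4 < 4 := Nat.mod_lt _ (by norm_num)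
      omega
    obtain ⟨m, hm⟩ : ∃ m, n + k = 4 * m + 2 := ⟨(n + k) / 4, by omega⟩
    have heq : r (n + k + 1) = r (n + k) := hn k hk4
    rw [hm] at heq
    rw [show 4 * m + 2 + 1 = 4 * m + 3 by ring, h43 m, key m] at heq
    have : (1 : ZMod 2) = 0 := by
      have := add_right_cancel (a := (1 : ZMod 2)) (b := r (2 * m + 1)) (c := 0)
      simp at heq
    simp at this
end

section
/- For the Rudin–Shapiro sequence (r_n) over F_2 and p_n = 3·4^{n+2} − 1, we have r_{p_n} = r_{p_n+1} = r_{p_n+2} = r_{p_n+3} = 0 for all n ∈ ℕ; hence (r_n) contains infinitely many runs of four consecutive 0's. -/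
theorem rudin_shapiro_four_zeros
    (r : ℕ → ZMod 2) (h0 : r 0 = 1)
    (h2 : ∀ n, r (2 * n) = r n)
    (h41 : ∀ n, r (4 * n + 1) = r n)
    (h43 : ∀ n, r (4 * n + 3) = 1 + r (2 * n + 1)) :
    ∀ n : ℕ, ∀ i < 4, r (3 * 4 ^ (n + 2) - 1 + i) = 0 := by
  have h11 : (1 : ZMod 2) + 1 = 0 := by decide
  have hr1 : r 1 = 1 := by have := h41 0; simpa [h0] using this
  have hr3 : r 3 = 0 := by have := h43 0; rw [this]; simp [hr1, h11]
  -- r (3 * 4^k) = 0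
  have hA : ∀ k, r (3 * 4 ^ k) = 0 := by
    intro k
    induction k with
    | zero => simpa using hr3
    | succ k ih =>
      have : 3 * 4 ^ (k + 1) = 2 * (2 * (3 * 4 ^ k)) := by ring
      rw [this, h2, h2, ih]
  -- r (6 * 4^k) = 0
  have hB : ∀ k, r (6 * 4 ^ k) = 0 := by
    intro k
    have : 6 * 4 ^ k = 2 * (3 * 4 ^ k) := by ring
    rw [this, h2, hA]
  have hpow : ∀ k : ℕ, 1 ≤ 4 ^ k := fun k => Nat.one_le_pow _ _ (by norm_num)
  -- r (6 * 4^k - 1) = 1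
  have hC : ∀ k, r (6 * 4 ^ k - 1) = 1 := by
    intro k
    induction k with
    | zero =>
      have := h41 1
      norm_num at this ⊢
      rw [this, hr1]
    | succ k ih =>
      have hk := hpow k
      have e1 : 6 * 4 ^ (k + 1) - 1 = 4 * (6 * 4 ^ k - 1) + 3 := by
        have : 4 ^ (k + 1) = 4 * 4 ^ k := by ring
        omega
      have e2 : 2 * (6 * 4 ^ k - 1) + 1 = 4 * (3 * 4 ^ k - 1) + 3 := by omega
      have e3 : 2 * (3 * 4 ^ k - 1) + 1 = 6 * 4 ^ k - 1 := by omega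
      rw [e1, h43, e2, h43, e3, ih]
      rw [← add_assoc, h11, zero_add]
  -- r (3 * 4^(k+1) - 1) = 0
  have hD : ∀ k, r (3 * 4 ^ (k + 1) - 1) = 0 := by
    intro k
    have hk := hpow k
    have e1 : 3 * 4 ^ (k + 1) - 1 = 4 * (3 * 4 ^ k - 1) + 3 := by
      have : 4 ^ (k + 1) = 4 * 4 ^ k := by ring
      omega
    have e2 : 2 * (3 * 4 ^ k - 1) + 1 = 6 * 4 ^ k - 1 := by omega
    rw [e1, h43, e2, hC, h11]
  intro n i hi
  have hk := hpow n
  have h4 : (4:ℕ) ^ (n + 2) = 16 * 4 ^ n := by ring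
  interval_cases i
  · have := hD (n + 1); simpa using this
  · have e : 3 * 4 ^ (n + 2) - 1 + 1 = 2 * (2 * (3 * 4 ^ (n + 1))) := by
      have : (4:ℕ) ^ (n + 1) = 4 * 4 ^ n := by ring
      omega
    rw [e, h2, h2, hA]
  · have e : 3 * 4 ^ (n + 2) - 1 + 2 = 4 * (3 * 4 ^ (n + 1)) + 1 := by
      have : (4:ℕ) ^ (n + 1) = 4 * 4 ^ n := by ring
      omega
    rw [e, h41, hA]
  · have e : 3 * 4 ^ (n + 2) - 1 + 3 = 2 * (4 * (6 * 4 ^ n) + 1) := by omega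
    rw [e, h2, h41, hB]
end

section
/- For the Rudin–Shapiro sequence (r_n) over F_2 and q_n = 2·4^{n+1} − 1, we have r_{q_n} = r_{q_n+1} = r_{q_n+2} = r_{q_n+3} = 1 for all n ∈ ℕ; hence (r_n) contains infinitely many runs of four consecutive 1's. -/
theorem rudin_shapiro_four_ones
    (r : ℕ → ZMod 2) (h0 : r 0 = 1)
    (h2 : ∀ n, r (2 * n) = r n)
    (h41 : ∀ n, r (4 * n + 1) = r n)
    (h43 : ∀ n, r (4 * n + 3) = 1 + r (2 * n + 1)) :
    ∀ n : ℕ, ∀ i < 4, r (2 * 4 ^ (n + 1) - 1 + i) = 1 := by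
  have hpowA : ∀ k : ℕ, r (4 ^ k) = 1 := by
    intro k
    induction k with
    | zero => simpa using (h41 0).trans h0
    | succ k ih =>
      have e1 : 4 ^ (k + 1) = 2 * (2 * 4 ^ k) := by ring
      rw [e1, h2, h2, ih]
  have hB : ∀ k : ℕ, r (2 * 4 ^ k - 1) = 1 := by
    intro k
    induction k with
    | zero => simpa using (h41 0).trans h0
    | succ k ih =>
      have hm : 1 ≤ 4 ^ k := Nat.one_le_pow _ _ (by norm_num)
      have e1 : 2 * 4 ^ (k + 1) - 1 = 4 * (2 * 4 ^ k - 1) + 3 := by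
        have : 4 ^ (k + 1) = 4 * 4 ^ k := by ring
        omega
      have e2 : 2 * (2 * 4 ^ k - 1) + 1 = 4 * (4 ^ k - 1) + 3 := by omega
      have e3 : 2 * (4 ^ k - 1) + 1 = 2 * 4 ^ k - 1 := by omega
      rw [e1, h43, e2, h43, e3, ih]
      decide
  intro n i hi
  have hm : 1 ≤ 4 ^ n := Nat.one_le_pow _ _ (by norm_num)
  have hp : 4 ^ (n + 1) = 4 * 4 ^ n := by ring
  interval_cases i
  · simpa using hB (n + 1)
  · have e : 2 * 4 ^ (n + 1) - 1 + 1 = 2 * 4 ^ (n + 1) := by omega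
    rw [e, h2]; exact hpowA (n + 1)
  · have e : 2 * 4 ^ (n + 1) - 1 + 2 = 4 * (2 * 4 ^ n) + 1 := by omega
    rw [e, h41, h2]; exact hpowA n
  · have e : 2 * 4 ^ (n + 1) - 1 + 3 = 2 * (4 * 4 ^ n + 1) := by omega
    rw [e, h2, h41]; exact hpowA n
end

section
/- The frequencies of 0's and 1's in the Rudin–Shapiro sequence (r_n) over F_2 both exist and equal 1/2: |{k < N : r_k = 1}| / N → 1/2 as N → ∞. -/
open Filter Finset

private lemma zmodCases (x : ZMod 2) : x = 0 ∨ x = 1 := by revert x; decide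

private def Scnt (r : ℕ → ZMod 2) (N : ℕ) : ℕ :=
  ((Finset.range N).filter fun k => r k = 1).card

private lemma Scnt_succ (r : ℕ → ZMod 2) (N : ℕ) :
    Scnt r (N + 1) = Scnt r N + (if r N = 1 then 1 else 0) := by
  unfold Scnt
  rw [Finset.range_add_one, Finset.filter_insert]
  split
  · rw [Finset.card_insert_of_notMem (by simp)]
  · simp

private lemma Scnt_le_add (r : ℕ → ZMod 2) (a b : ℕ) :
    Scnt r a ≤ Scnt r (a + b) ∧ Scnt r (a + b) ≤ Scnt r a + b := by
  induction b with
  | zero => simp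
  | succ b ih =>
    rw [← Nat.add_assoc, Scnt_succ]
    constructor
    · exact le_trans ih.1 (Nat.le_add_right _ _)
    · split <;> omega

private lemma Scnt_le (r : ℕ → ZMod 2) (N : ℕ) : Scnt r N ≤ N := by
  have := (Scnt_le_add r 0 N).2
  simpa [Scnt] using this

private lemma Scnt_four (r : ℕ → ZMod 2)
    (h2 : ∀ n, r (2 * n) = r n)
    (h41 : ∀ n, r (4 * n + 1) = r n)
    (h43 : ∀ n, r (4 * n + 3) = 1 + r (2 * n + 1)) (N : ℕ) :
    Scnt r (4 * N) = 2 * Scnt r N + N := by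
  induction N with
  | zero => simp [Scnt]
  | succ N ih =>
    have e0 : r (4 * N) = r N := by
      have a := h2 (2 * N); have b := h2 N
      rw [show 4 * N = 2 * (2 * N) by ring] at *
      rw [a, b]
    have e2 : r (4 * N + 2) = r (2 * N + 1) := by
      have := h2 (2 * N + 1)
      rw [show 2 * (2 * N + 1) = 4 * N + 2 by ring] at this
      exact this
    have e3 := h43 N
    have step : Scnt r (4 * (N + 1)) = Scnt r (4 * N)
        + (if r (4 * N) = 1 then 1 else 0)
        + (if r (4 * N + 1) = 1 then 1 else 0)
        + (if r (4 * N + 2) = 1 then 1 else 0)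
        + (if r (4 * N + 3) = 1 then 1 else 0) := by
      rw [show 4 * (N + 1) = (4 * N + 3) + 1 by ring, Scnt_succ,
        show 4 * N + 3 = (4 * N + 2) + 1 by ring, Scnt_succ,
        show 4 * N + 2 = (4 * N + 1) + 1 by ring, Scnt_succ,
        show 4 * N + 1 = (4 * N) + 1 by ring, Scnt_succ]
    rw [step, ih, e0, h41, e2, e3, Scnt_succ]
    rcases zmodCases (r (2 * N + 1)) with h | h <;>
      rcases zmodCases (r N) with h' | h' <;>
        simp [h, h'] <;> omega

private lemma U_bound (r : ℕ → ZMod 2)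
    (h2 : ∀ n, r (2 * n) = r n)
    (h41 : ∀ n, r (4 * n + 1) = r n)
    (h43 : ∀ n, r (4 * n + 3) = 1 + r (2 * n + 1)) (N : ℕ) :
    |2 * (Scnt r N : ℤ) - N| ^ 3 ≤ 1728 * (N : ℤ) ^ 2 := by
  induction N using Nat.strong_induction_on with
  | _ N ih =>
  by_cases hN : N < 4
  · have hS : Scnt r N ≤ N := Scnt_le r N
    have habs : |2 * (Scnt r N : ℤ) - N| ≤ N := by
      rw [abs_le]
      constructor <;> [skip; skip] <;> push_cast <;> omega
    have h1 : |2 * (Scnt r N : ℤ) - N| ^ 3 ≤ (N : ℤ) ^ 3 :=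
      pow_le_pow_left₀ (abs_nonneg _) habs 3
    have h2' : (N : ℤ) ≤ 3 := by exact_mod_cast Nat.le_of_lt_succ hN
    have h3 : (0 : ℤ) ≤ N := Int.natCast_nonneg N
    nlinarith
  · push_neg at hN
    set q := N / 4 with hqdef
    set j := N % 4 with hjdef
    have hNeq : N = 4 * q + j := (Nat.div_add_mod N 4).symm
    have hj3 : j ≤ 3 := by omega
    have hq1 : 1 ≤ q := by omega
    have hqN : q < N := by omega
    have ihq := ih q hqN
    set u := |2 * (Scnt r q : ℤ) - q| with hu
    have hu0 : 0 ≤ u := abs_nonneg _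
    -- u ≤ 12 q
    have hu12 : u ≤ 12 * q := by
      have hq0 : (0:ℤ) ≤ q := by positivity
      have : u ^ 3 ≤ (12 * (q:ℤ)) ^ 3 := by nlinarith
      exact le_of_pow_le_pow_left₀ (by norm_num) (by positivity) this
    -- |U N| ≤ 2 u + 3
    have hS4 : Scnt r (4 * q) = 2 * Scnt r q + q := Scnt_four r h2 h41 h43 q
    have hlo : Scnt r (4 * q) ≤ Scnt r N := by
      rw [hNeq]; exact (Scnt_le_add r (4 * q) j).1
    have hhi : Scnt r N ≤ Scnt r (4 * q) + j := by
      rw [hNeq]; exact (Scnt_le_add r (4 * q) j).2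
    have hkey : |2 * (Scnt r N : ℤ) - N| ≤ 2 * u + 3 := by
      have h1 : (2 * (Scnt r q : ℤ) - q) ≤ u := le_abs_self _
      have h2' : -u ≤ (2 * (Scnt r q : ℤ) - q) := neg_abs_le _
      rw [abs_le]
      constructor <;>
      · have hNc : (N : ℤ) = 4 * q + j := by exact_mod_cast congrArg (Nat.cast : ℕ → ℤ) hNeq
        have hloZ : (Scnt r (4*q) : ℤ) ≤ Scnt r N := by exact_mod_cast hlo
        have hhiZ : (Scnt r N : ℤ) ≤ Scnt r (4*q) + j := by exact_mod_cast hhi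
        have hS4Z : (Scnt r (4*q) : ℤ) = 2 * Scnt r q + q := by exact_mod_cast hS4
        have hjZ : (j : ℤ) ≤ 3 := by exact_mod_cast hj3
        have hj0 : (0:ℤ) ≤ j := Int.natCast_nonneg j
        linarith
    have hcube : |2 * (Scnt r N : ℤ) - N| ^ 3 ≤ (2 * u + 3) ^ 3 :=
      pow_le_pow_left₀ (abs_nonneg _) hkey 3
    have hNc : (N : ℤ) = 4 * q + j := by exact_mod_cast congrArg (Nat.cast : ℕ → ℤ) hNeq
    have hj0 : (0:ℤ) ≤ j := Int.natCast_nonneg j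
    have hq1Z : (1:ℤ) ≤ q := by exact_mod_cast hq1
    nlinarith [sq_nonneg ((q:ℤ)), sq_nonneg u, mul_nonneg hu0 hj0]

theorem rudin_shapiro_frequency_half
    (r : ℕ → ZMod 2) (h0 : r 0 = 1)
    (h2 : ∀ n, r (2 * n) = r n)
    (h41 : ∀ n, r (4 * n + 1) = r n)
    (h43 : ∀ n, r (4 * n + 3) = 1 + r (2 * n + 1)) :
    Filter.Tendsto
      (fun N : ℕ => (((Finset.range N).filter fun k => r k = 1).card : ℝ) / N)
      Filter.atTop (nhds (1 / 2)) ∧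
    Filter.Tendsto
      (fun N : ℕ => (((Finset.range N).filter fun k => r k = 0).card : ℝ) / N)
      Filter.atTop (nhds (1 / 2)) := by
  have key : Filter.Tendsto (fun N : ℕ => ((Scnt r N : ℝ)) / N) atTop (nhds (1 / 2)) := by
    rw [Metric.tendsto_atTop]
    intro ε hε
    obtain ⟨M, hM⟩ : ∃ M : ℕ, 216 / ε ^ 3 < M ∧ 1 ≤ M := by
      refine ⟨⌈216 / ε ^ 3⌉₊ + 1, ?_, by omega⟩
      push_cast
      exact lt_of_le_of_lt (Nat.le_ceil _) (by linarith)
    refine ⟨M, fun N hN => ?_⟩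
    have hN1 : 1 ≤ N := le_trans hM.2 hN
    have hNpos : (0 : ℝ) < N := by exact_mod_cast hN1
    have hNR : 216 / ε ^ 3 < (N : ℝ) :=
      lt_of_lt_of_le hM.1 (by exact_mod_cast hN)
    have h216 : 216 < ε ^ 3 * N := by
      rw [div_lt_iff₀ (by positivity)] at hNR
      linarith
    have hb := U_bound r h2 h41 h43 N
    have hbR : |2 * (Scnt r N : ℝ) - N| ^ 3 ≤ 1728 * (N : ℝ) ^ 2 := by
      exact_mod_cast hb
    have hlt : |2 * (Scnt r N : ℝ) - N| < 2 * ε * N := by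
      by_contra h
      push_neg at h
      have h3 : (2 * ε * N) ^ 3 ≤ |2 * (Scnt r N : ℝ) - N| ^ 3 :=
        pow_le_pow_left₀ (by positivity) h 3
      nlinarith [mul_lt_mul_of_pos_right h216 (by positivity : (0:ℝ) < (N:ℝ)^2)]
    rw [Real.dist_eq]
    have heq : (Scnt r N : ℝ) / N - 1 / 2 = (2 * (Scnt r N : ℝ) - N) / (2 * N) := by
      field_simp
    rw [heq, abs_div, abs_of_pos (by positivity : (0:ℝ) < 2 * N)]
    rw [div_lt_iff₀ (by positivity)]
    calc |2 * (Scnt r N : ℝ) - N| < 2 * ε * N := hlt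
      _ = ε * (2 * N) := by ring
  constructor
  · exact key
  · have hsum : ∀ N : ℕ, (((Finset.range N).filter fun k => r k = 0).card) = N - Scnt r N := by
      intro N
      have hfe : ((Finset.range N).filter fun k => r k = 0)
          = ((Finset.range N).filter fun k => ¬ r k = 1) := by
        apply Finset.filter_congr
        intro x _
        rcases zmodCases (r x) with h | h <;> simp [h]
      have := Finset.card_filter_add_card_filter_not
        (s := Finset.range N) (p := fun k => r k = 1)
      rw [hfe]
      unfold Scnt
      simp only [Finset.card_range] at this ⊢
      omega
    have heq : ∀ᶠ N : ℕ in atTop,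
        (((Finset.range N).filter fun k => r k = 0).card : ℝ) / N
          = 1 - (Scnt r N : ℝ) / N := by
      filter_upwards [eventually_ge_atTop 1] with N hN1
      have hNpos : (0 : ℝ) < N := by exact_mod_cast hN1
      rw [hsum N]
      rw [Nat.cast_sub (Scnt_le r N)]
      field_simp
    rw [Filter.tendsto_congr' heq]
    have h' : Filter.Tendsto (fun N : ℕ => 1 - (Scnt r N : ℝ) / N) atTop (nhds (1 - 1/2)) :=
      (tendsto_const_nhds).sub key
    rwa [show (1:ℝ) - 1/2 = 1/2 from by norm_num] at h'
end

section
/- Let R_2 = X·R ∈ F_2[[X]] where R is the generating series of the Rudin–Shapiro sequence. The composition inverse V of R_2 satisfies (X^2 + X + 1)V^5 + X^2 V^4 + (X^2 + X)V + X^2 = 0. -/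
/-!
Over `𝔽₂` squaring is the Frobenius, `R² = R(X²)`, so the recurrences for `r` say exactly that
`R + (1 + X) R²` has coefficient `1` in the degrees `≡ 3 (mod 4)` and `0` elsewhere, i.e. equals
`X³ / (1 + X⁴)`. As `(1 + X)⁴ = 1 + X⁴`, this is the functional equation of `R`; multiplied by `X²`
it becomes a polynomial relation between `X` and `R₂ = X R`. Substituting `V` is a ring
homomorphism sending `X ↦ V` and `R₂ ↦ X`, so it swaps the two roles and gives the equation for `V`.
-/

open PowerSeries

/-- Composition `f(g(X))` of formal power series (meaningful when the
constant coefficient of `g` is zero). -/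
noncomputable def PowerSeries.comp {R : Type*} [CommRing R]
    (f g : PowerSeries R) : PowerSeries R :=
  PowerSeries.mk fun n =>
    ∑ k ∈ Finset.range (n + 1), PowerSeries.coeff k f * PowerSeries.coeff n (g ^ k)

namespace PowerSeries

variable {A : Type*} [CommRing A]

instance charP (p : ℕ) [CharP A p] : CharP A⟦X⟧ p :=
  charP_of_injective_ringHom C_injective p

theorem coeff_pow_eq_zero_of_constantCoeff_eq_zero {V : A⟦X⟧} (hV : constantCoeff V = 0)
    {n k : ℕ} (h : n < k) : coeff n (V ^ k) = 0 := by
  obtain ⟨W, rfl⟩ := X_dvd_iff.2 hV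
  rw [mul_pow, coeff_X_pow_mul', if_neg (by omega)]

theorem comp_eq_subst {V : A⟦X⟧} (hV : constantCoeff V = 0) (f : A⟦X⟧) :
    f.comp V = f.subst V := by
  ext n
  rw [coeff_subst' (HasSubst.of_constantCoeff_zero' hV), PowerSeries.comp, coeff_mk,
    finsum_eq_sum_of_support_subset (s := Finset.range (n + 1))]
  · simp only [smul_eq_mul]
  · intro k hk
    by_contra h
    simp only [Finset.coe_range, Set.mem_Iio, not_lt] at h
    exact hk (by simp [coeff_pow_eq_zero_of_constantCoeff_eq_zero hV (Nat.lt_of_succ_le h)])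

theorem one_sub_X_pow_four_mul_mk_ite_mod_four_eq_three :
    (1 - X ^ 4 : A⟦X⟧) * mk (fun n => if n % 4 = 3 then 1 else 0) = X ^ 3 := by
  ext n
  rw [sub_mul, one_mul, map_sub, coeff_X_pow_mul', coeff_X_pow, coeff_mk]
  rcases lt_or_ge n 4 with hn | hn
  · interval_cases n <;> simp
  · obtain ⟨m, rfl⟩ := Nat.exists_eq_add_of_le' hn
    simp [Nat.add_mod_right]

end PowerSeries

theorem ZMod.expand_card_powerSeries {p : ℕ} [Fact p.Prime] (f : (ZMod p)⟦X⟧) :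
    expand p (Fact.out : p.Prime).ne_zero f = f ^ p := by
  ext n
  rw [coeff_expand, ← coeff_coe_trunc_of_lt n.lt_succ_self, ← trunc_trunc_pow,
    coeff_coe_trunc_of_lt n.lt_succ_self, ← Polynomial.coe_pow, ← ZMod.expand_card,
    Polynomial.coeff_coe, Polynomial.coeff_expand (Fact.out : p.Prime).pos, coeff_trunc]
  split_ifs <;> first | rfl | exact absurd (Nat.div_le_self n p) (by omega)

theorem rudinShapiro_add_one_add_X_mul_sq {r : ℕ → ZMod 2} (h2 : ∀ n, r (2 * n) = r n)
    (h41 : ∀ n, r (4 * n + 1) = r n) (h43 : ∀ n, r (4 * n + 3) = 1 + r (2 * n + 1)) :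
    mk r + (1 + X) * mk r ^ 2 = mk fun n => if n % 4 = 3 then 1 else 0 := by
  rw [← ZMod.expand_card_powerSeries (p := 2), add_mul, one_mul]
  ext n
  obtain ⟨j, rfl | rfl⟩ := Nat.even_or_odd' n
  · have hX : coeff (2 * j) (X * expand 2 two_ne_zero (mk r)) = 0 := by
      rcases j with _ | k
      · exact coeff_zero_X_mul _
      · rw [show 2 * (k + 1) = 2 * k + 1 + 1 by ring, coeff_succ_X_mul,
          coeff_expand_of_not_dvd _ _ _ (by omega)]
    simp only [map_add, coeff_mk, coeff_expand_mul, hX, h2, add_zero, CharTwo.add_self_eq_zero]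
    rw [if_neg (by omega)]
  · simp only [map_add, coeff_mk, coeff_succ_X_mul, coeff_expand_mul,
      coeff_expand_of_not_dvd _ _ _ (by omega : ¬ 2 ∣ 2 * j + 1), zero_add]
    obtain ⟨q, rfl | rfl⟩ := Nat.even_or_odd' j
    · rw [show 2 * (2 * q) + 1 = 4 * q + 1 by ring, h41, h2, CharTwo.add_self_eq_zero,
        if_neg (by omega)]
    · rw [show 2 * (2 * q + 1) + 1 = 4 * q + 3 by ring, h43, if_pos (by omega),
        add_assoc, CharTwo.add_self_eq_zero, add_zero]

theorem rudinShapiro_functional_equation {r : ℕ → ZMod 2} (h2 : ∀ n, r (2 * n) = r n)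
    (h41 : ∀ n, r (4 * n + 1) = r n) (h43 : ∀ n, r (4 * n + 3) = 1 + r (2 * n + 1)) :
    (1 + X) ^ 5 * mk r ^ 2 + (1 + X) ^ 4 * mk r + X ^ 3 = 0 := by
  have h := one_sub_X_pow_four_mul_mk_ite_mod_four_eq_three (A := ZMod 2)
  rw [← rudinShapiro_add_one_add_X_mul_sq h2 h41 h43] at h
  -- `reduce_mod_char!` only sees `CharP` facts in the local context
  have : CharP (ZMod 2)⟦X⟧ 2 := inferInstance
  linear_combination (norm := (ring_nf; reduce_mod_char!)) h

theorem rudin_shapiro_shift_inverse_equation_general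
    (r : ℕ → ZMod 2)
    (h2 : ∀ n, r (2 * n) = r n)
    (h41 : ∀ n, r (4 * n + 1) = r n)
    (h43 : ∀ n, r (4 * n + 3) = 1 + r (2 * n + 1))
    (R R₂ V : PowerSeries (ZMod 2))
    (hR : R = PowerSeries.mk r) (hR2 : R₂ = PowerSeries.X * R)
    (hV0 : PowerSeries.constantCoeff V = 0)
    (hRV : PowerSeries.comp R₂ V = PowerSeries.X) :
    (PowerSeries.X ^ 2 + PowerSeries.X + 1) * V ^ 5 + PowerSeries.X ^ 2 * V ^ 4
      + (PowerSeries.X ^ 2 + PowerSeries.X) * V + PowerSeries.X ^ 2 = 0 := by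
  have hR₂ : (1 + X) ^ 5 * R₂ ^ 2 + X * (1 + X) ^ 4 * R₂ + X ^ 5 = 0 := by
    rw [hR2, hR]
    linear_combination X ^ 2 * rudinShapiro_functional_equation h2 h41 h43
  have hV := HasSubst.of_constantCoeff_zero' hV0
  have hR₂V : substAlgHom hV R₂ = X := by rw [coe_substAlgHom, ← comp_eq_subst hV0, hRV]
  have h := congrArg (substAlgHom hV) hR₂
  simp only [map_add, map_mul, map_pow, map_one, map_zero, substAlgHom_X, hR₂V] at h
  have : CharP (ZMod 2)⟦X⟧ 2 := inferInstance
  linear_combination (norm := (ring_nf; reduce_mod_char!)) h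

theorem rudin_shapiro_shift_inverse_equation
    (r : ℕ → ZMod 2) (h0 : r 0 = 1)
    (h2 : ∀ n, r (2 * n) = r n)
    (h41 : ∀ n, r (4 * n + 1) = r n)
    (h43 : ∀ n, r (4 * n + 3) = 1 + r (2 * n + 1))
    (R R₂ V : PowerSeries (ZMod 2))
    (hR : R = PowerSeries.mk r) (hR2 : R₂ = PowerSeries.X * R)
    (hV0 : PowerSeries.constantCoeff V = 0)
    (hRV : PowerSeries.comp R₂ V = PowerSeries.X) :
    (PowerSeries.X ^ 2 + PowerSeries.X + 1) * V ^ 5 + PowerSeries.X ^ 2 * V ^ 4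
      + (PowerSeries.X ^ 2 + PowerSeries.X) * V + PowerSeries.X ^ 2 = 0 :=
  rudin_shapiro_shift_inverse_equation_general r h2 h41 h43 R R₂ V hR hR2 hV0 hRV
end

section
/- Let (u_n) be the coefficient sequence of the composition inverse U of R_1 = R + 1 over F_2, where R is the Rudin–Shapiro generating series. If both the frequency of 0's and the frequency of 1's exist in (u_n) (that is, if |{k < N : u_k = 1}|/N converges), this leads to a contradiction; hence the frequencies of 0's and 1's in (u_n) do not both exist — in fact neither exists, given that (u_n) contains arbitrarily long runs of 0's and arbitrarily long runs of 1's. -/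
open PowerSeries Filter

/-! A run of one symbol filling `[a t, (a + 1) t)` adds `t` to the count at `(a + 1) t`, so a
frequency `L` must satisfy `(a + 1) L = a L + 1` along `t = 2 ^ k`, i.e. `L = 1`; a run of the
other symbol forces `L = 0` in the same way. -/

open Topology

theorem frequency_eq_of_count_block {c : ℕ → ℕ} {L : ℝ}
    (hL : Tendsto (fun N ↦ (c N : ℝ) / N) atTop (𝓝 L)) {a : ℕ} (ha : 0 < a)
    {t : ℕ → ℕ} (ht : Tendsto t atTop atTop) {d : ℝ}
    (hc : ∀ k, (c ((a + 1) * t k) : ℝ) = c (a * t k) + d * t k) : L = d := by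
  set f : ℕ → ℝ := fun N ↦ (c N : ℝ) / N
  have along (b : ℕ) (hb : 0 < b) : Tendsto (fun k ↦ f (b * t k)) atTop (𝓝 L) :=
    hL.comp (tendsto_atTop_mono (fun k ↦ Nat.le_mul_of_pos_left _ hb) ht)
  have hlim := ((along (a + 1) a.succ_pos).const_mul ((a + 1 : ℕ) : ℝ)).sub
    ((along a ha).const_mul (a : ℝ))
  have hblock : ∀ᶠ k in atTop, ((a + 1 : ℕ) : ℝ) * f ((a + 1) * t k) - a * f (a * t k) = d := by
    filter_upwards [ht.eventually_ne_atTop 0] with k hk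
    have : (t k : ℝ) ≠ 0 := by exact_mod_cast hk
    simp only [f, hc k]
    push_cast
    field_simp
    ring
  have := tendsto_nhds_unique (hlim.congr' hblock) tendsto_const_nhds
  push_cast at this
  linarith

theorem Nat.count_add_of_forall {p : ℕ → Prop} [DecidablePred p] {a b : ℕ}
    (h : ∀ m < b, p (a + m)) : Nat.count p (a + b) = Nat.count p a + b := by
  rw [Nat.count_add, Nat.count_of_forall h]

theorem Nat.count_add_of_forall_not {p : ℕ → Prop} [DecidablePred p] {a b : ℕ}
    (h : ∀ m < b, ¬ p (a + m)) : Nat.count p (a + b) = Nat.count p a := by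
  rw [Nat.count_add, Nat.count_of_forall_not h, add_zero]

section Runs

variable {p : ℕ → Prop} [DecidablePred p] {L : ℝ} {a : ℕ} {t : ℕ → ℕ}

theorem frequency_eq_one_of_runs
    (hL : Tendsto (fun N ↦ (Nat.count p N : ℝ) / N) atTop (𝓝 L)) (ha : 0 < a)
    (ht : Tendsto t atTop atTop) (hrun : ∀ k, ∀ m < t k, p (a * t k + m)) : L = 1 :=
  frequency_eq_of_count_block hL ha ht fun k ↦ by
    rw [add_one_mul, Nat.count_add_of_forall (hrun k)]
    push_cast
    ring

theorem frequency_eq_zero_of_runs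
    (hL : Tendsto (fun N ↦ (Nat.count p N : ℝ) / N) atTop (𝓝 L)) (ha : 0 < a)
    (ht : Tendsto t atTop atTop) (hrun : ∀ k, ∀ m < t k, ¬ p (a * t k + m)) : L = 0 :=
  frequency_eq_of_count_block hL ha ht fun k ↦ by
    rw [add_one_mul, Nat.count_add_of_forall_not (hrun k), zero_mul, add_zero]

theorem not_tendsto_frequency_of_runs {b : ℕ} (ha : 0 < a) (hb : 0 < b)
    (ht : Tendsto t atTop atTop) (hpos : ∀ k, ∀ m < t k, p (a * t k + m))
    (hneg : ∀ k, ∀ m < t k, ¬ p (b * t k + m)) :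
    ¬ ∃ L : ℝ, Tendsto (fun N ↦ (Nat.count p N : ℝ) / N) atTop (𝓝 L) := by
  rintro ⟨L, hL⟩
  have h1 := frequency_eq_one_of_runs hL ha ht hpos
  have h0 := frequency_eq_zero_of_runs hL hb ht hneg
  exact one_ne_zero (h1.symm.trans h0)

end Runs

theorem rudin_shapiro_prime_inverse_no_frequency_general
    (u : ℕ → ZMod 2)
    (hrun0 : ∀ k : ℕ, ∀ m < 2 ^ k, u (79 * 2 ^ k + m) = 0)
    (hrun1 : ∀ k : ℕ, ∀ m < 2 ^ k, u (47 * 2 ^ k + m) = 1) :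
    (¬ ∃ L : ℝ, Filter.Tendsto
        (fun N : ℕ => (((Finset.range N).filter fun k => u k = 0).card : ℝ) / N)
        Filter.atTop (nhds L)) ∧
    (¬ ∃ L : ℝ, Filter.Tendsto
        (fun N : ℕ => (((Finset.range N).filter fun k => u k = 1).card : ℝ) / N)
        Filter.atTop (nhds L)) := by
  have hpow : Tendsto (fun k : ℕ ↦ 2 ^ k) atTop atTop :=
    tendsto_pow_atTop_atTop_of_one_lt one_lt_two
  simp only [← Nat.count_eq_card_filter_range]
  constructor
  · refine not_tendsto_frequency_of_runs (b := 47) (by norm_num) (by norm_num) hpow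
      hrun0 fun k m hm ↦ ?_
    rw [hrun1 k m hm]
    decide
  · refine not_tendsto_frequency_of_runs (b := 79) (by norm_num) (by norm_num) hpow
      hrun1 fun k m hm ↦ ?_
    rw [hrun0 k m hm]
    decide

theorem rudin_shapiro_prime_inverse_no_frequency
    (r : ℕ → ZMod 2) (h0 : r 0 = 1)
    (h2 : ∀ n, r (2 * n) = r n)
    (h41 : ∀ n, r (4 * n + 1) = r n)
    (h43 : ∀ n, r (4 * n + 3) = 1 + r (2 * n + 1))
    (R R₁ U : PowerSeries (ZMod 2))
    (hR : R = PowerSeries.mk r) (hR1 : R₁ = R + 1)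
    (hU0 : PowerSeries.constantCoeff U = 0)
    (hRU : PowerSeries.comp R₁ U = PowerSeries.X)
    (hUR : PowerSeries.comp U R₁ = PowerSeries.X)
    (u : ℕ → ZMod 2) (hu : ∀ n, u n = PowerSeries.coeff n U)
    (hrun0 : ∀ k : ℕ, ∀ m < 2 ^ k, u (79 * 2 ^ k + m) = 0)
    (hrun1 : ∀ k : ℕ, ∀ m < 2 ^ k, u (47 * 2 ^ k + m) = 1) :
    (¬ ∃ L : ℝ, Filter.Tendsto
        (fun N : ℕ => (((Finset.range N).filter fun k => u k = 0).card : ℝ) / N)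
        Filter.atTop (nhds L)) ∧
    (¬ ∃ L : ℝ, Filter.Tendsto
        (fun N : ℕ => (((Finset.range N).filter fun k => u k = 1).card : ℝ) / N)
        Filter.atTop (nhds L)) :=
  rudin_shapiro_prime_inverse_no_frequency_general u hrun0 hrun1
end
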